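/- arXiv:1504.07596 — 4 statements merged into one kernel-verified Lean document; each statement's English description precedes it below -/
import Mathlib

section
/- For 2 ≤ i, j ≤ n−1 with |i−j| ≥ 2, the matrices M(σ_i) and M(σ_j) (defined as the identity except M(σ_k)_{k,k−1}=1, M(σ_k)_{k,k}=−t, M(σ_k)_{k,k+1}=−t for k = i, j) commute: M(σ_i)·M(σ_j) = M(σ_j)·M(σ_i). -/
open LaurentPolynomial

noncomputable section

/-- The ring `ℤ[t^{±1}, s^{±1}]` of Laurent polynomials in two variables. -/
abbrev L2 : Type := LaurentPolynomial (LaurentPolynomial ℤ)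

/-- The variable `t`. -/
def tt : L2 := LaurentPolynomial.C (T 1)

/-- The variable `s`. -/
def ss : L2 := T 1

/-- The inverse `s⁻¹`. -/
def ssInv : L2 := T (-1)

/-- `M(σ_i)` for `2 ≤ i ≤ n-1` (paper's 1-based index `i`): identity except
row `i` which has entries `1, -t, -t` in columns `i-1, i, i+1`. -/
def Msig (n i : ℕ) : Matrix (Fin n) (Fin n) L2 :=
  Matrix.of fun a b =>
    if (a : ℕ) + 1 = i then
      if (b : ℕ) + 2 = i then 1
      else if (b : ℕ) + 1 = i then -tt
      else if (b : ℕ) = i then -tt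
      else 0
    else if a = b then 1 else 0

lemma Ezero (n i j : ℕ) (h : i + 2 ≤ j ∨ j + 2 ≤ i) :
    (Msig n i - 1) * (Msig n j - 1) = 0 := by
  refine Matrix.ext fun a b => ?_
  rw [Matrix.mul_apply]
  simp only [Matrix.zero_apply]
  apply Finset.sum_eq_zero
  intro k _
  simp only [Matrix.sub_apply, Matrix.one_apply, Msig, Matrix.of_apply]
  split_ifs <;> simp_all [Fin.ext_iff, sub_eq_zero] <;> omega

/-- `M(σ_i)` and `M(σ_j)` commute for distant `i, j` with `2 ≤ i, j ≤ n-1`. -/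
theorem stmt2 (n : ℕ) (hn : 5 ≤ n) (i j : ℕ) (hi2 : 2 ≤ i) (hi : i ≤ n - 1)
    (hj2 : 2 ≤ j) (hj : j ≤ n - 1) (hdist : i + 2 ≤ j ∨ j + 2 ≤ i) :
    Msig n i * Msig n j = Msig n j * Msig n i := by
  have h1 := Ezero n i j hdist
  have h2 := Ezero n j i hdist.symm
  rw [sub_mul, mul_sub, mul_sub, one_mul, mul_one, mul_one, sub_sub, sub_eq_zero] at h1 h2
  rw [h1, h2]; abel

end
end

section
/- Let M(ρ) be the n×n matrix with M(ρ)_{i+1,i} = 1 for i = 1,…,n−1, M(ρ)_{1,n} = s^{−1}, and zeros elsewhere, and let M(σ_i) for 2 ≤ i ≤ n−2 be as in the decategorified representation (identity except row i: entries 1, −t, −t in columns i−1, i, i+1). Then M(ρ)·M(σ_i)·M(ρ)^{−1} = M(σ_{i+1}) for 2 ≤ i ≤ n−2. -/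
open LaurentPolynomial

noncomputable section

/-- The matrix `M(ρ)`: `M(ρ)_{i+1,i} = 1` for `i = 1, …, n-1`, `M(ρ)_{1,n} = s⁻¹`. -/
def Mrho (n : ℕ) : Matrix (Fin n) (Fin n) L2 :=
  Matrix.of fun i j =>
    if (i : ℕ) = (j : ℕ) + 1 then 1
    else if (i : ℕ) = 0 ∧ (j : ℕ) = n - 1 then ssInv
    else 0

/-- The matrix `M(ρ)⁻¹`: `M(ρ)⁻¹_{i,i+1} = 1` for `i = 1, …, n-1`, `M(ρ)⁻¹_{n,1} = s`. -/
def MrhoInv (n : ℕ) : Matrix (Fin n) (Fin n) L2 :=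
  Matrix.of fun i j =>
    if (j : ℕ) = (i : ℕ) + 1 then 1
    else if (i : ℕ) = n - 1 ∧ (j : ℕ) = 0 then ss
    else 0

lemma ssInv_mul_ss : ssInv * ss = 1 := by
  rw [ssInv, ss, ← T_add]; norm_num

lemma Mrho_mul {n : ℕ} (hn : 0 < n) (X : Matrix (Fin n) (Fin n) L2)
    (a c : Fin n) :
    (Mrho n * X) a c =
      if (a : ℕ) = 0 then ssInv * X ⟨n - 1, by omega⟩ c
      else X ⟨(a : ℕ) - 1, by omega⟩ c := by
  rw [Matrix.mul_apply]
  split_ifs with h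
  · rw [Finset.sum_eq_single (⟨n - 1, by omega⟩ : Fin n)]
    · simp only [Mrho, Matrix.of_apply]
      rw [if_neg (by omega), if_pos ⟨h, by trivial⟩]
    · intro j _ hj
      have hj' : (j : ℕ) ≠ n - 1 := fun hh => hj (Fin.ext hh)
      simp only [Mrho, Matrix.of_apply]
      rw [if_neg (by omega), if_neg (by tauto), zero_mul]
    · intro hh; exact absurd (Finset.mem_univ _) hh
  · rw [Finset.sum_eq_single (⟨(a : ℕ) - 1, by omega⟩ : Fin n)]
    · simp only [Mrho, Matrix.of_apply]
      rw [if_pos (by omega), one_mul]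
    · intro j _ hj
      have hj' : (j : ℕ) ≠ (a : ℕ) - 1 := fun hh => hj (Fin.ext hh)
      simp only [Mrho, Matrix.of_apply]
      rw [if_neg (by omega), if_neg (by tauto), zero_mul]
    · intro hh; exact absurd (Finset.mem_univ _) hh

lemma mul_MrhoInv {n : ℕ} (hn : 0 < n) (X : Matrix (Fin n) (Fin n) L2)
    (a b : Fin n) :
    (X * MrhoInv n) a b =
      if (b : ℕ) = 0 then X a ⟨n - 1, by omega⟩ * ss
      else X a ⟨(b : ℕ) - 1, by omega⟩ := by
  rw [Matrix.mul_apply]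
  split_ifs with h
  · rw [Finset.sum_eq_single (⟨n - 1, by omega⟩ : Fin n)]
    · simp only [MrhoInv, Matrix.of_apply]
      rw [if_neg (by omega), if_pos ⟨by trivial, h⟩]
    · intro j _ hj
      have hj' : (j : ℕ) ≠ n - 1 := fun hh => hj (Fin.ext hh)
      simp only [MrhoInv, Matrix.of_apply]
      rw [if_neg (by omega), if_neg (by tauto), mul_zero]
    · intro hh; exact absurd (Finset.mem_univ _) hh
  · rw [Finset.sum_eq_single (⟨(b : ℕ) - 1, by omega⟩ : Fin n)]
    · simp only [MrhoInv, Matrix.of_apply]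
      rw [if_pos (by omega), mul_one]
    · intro j _ hj
      have hj' : (j : ℕ) ≠ (b : ℕ) - 1 := fun hh => hj (Fin.ext hh)
      simp only [MrhoInv, Matrix.of_apply]
      rw [if_neg (by omega), if_neg (by tauto), mul_zero]
    · intro hh; exact absurd (Finset.mem_univ _) hh

/-- `M(ρ) · M(σ_i) · M(ρ)⁻¹ = M(σ_{i+1})` for `2 ≤ i ≤ n-2`. -/
theorem stmt3 (n : ℕ) (hn : 4 ≤ n) (i : ℕ) (h2 : 2 ≤ i) (h : i ≤ n - 2) :
    Mrho n * Msig n i * MrhoInv n = Msig n (i + 1) := by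
  have hn0 : 0 < n := by omega
  ext a b
  rw [mul_MrhoInv hn0, Mrho_mul hn0, Mrho_mul hn0]
  have ha' := a.isLt
  have hb' := b.isLt
  by_cases hb : (b : ℕ) = 0 <;> by_cases ha : (a : ℕ) = 0 <;>
    simp only [hb, ha, if_pos, if_neg, if_true, if_false, ite_true, ite_false,
      eq_self_iff_true, not_false_iff] <;>
  · simp only [Msig, Matrix.of_apply, Fin.ext_iff, Fin.val_mk]
    split_ifs <;> first | rfl | omega | simp [ssInv_mul_ss]

end
end

section
/- The n×n matrices B(σ_i) over ℤ[t^{±1},q^{±1}] of the homological representation ρ_RH, given for 2 ≤ i ≤ n−1 by the identity except B(σ_i)_{i,i−1}=1, B(σ_i)_{i,i}=−t, B(σ_i)_{i,i+1}=t, satisfy the braid relations B(σ_i)B(σ_{i+1})B(σ_i) = B(σ_{i+1})B(σ_i)B(σ_{i+1}) for 2 ≤ i ≤ n−2 and B(σ_i)B(σ_j) = B(σ_j)B(σ_i) when |i−j| ≥ 2. -/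
set_option maxHeartbeats 1600000


open LaurentPolynomial

noncomputable section

/-- The variable `q`. -/
def qq : L2 := T 1

/-- `B(σ_i)` for `2 ≤ i ≤ n-1` (paper's 1-based index `i`): identity except
row `i` which has entries `1, -t, t` in columns `i-1, i, i+1`. -/
def Bsig (n i : ℕ) : Matrix (Fin n) (Fin n) L2 :=
  Matrix.of fun a b =>
    if (a : ℕ) + 1 = i then
      if (b : ℕ) + 2 = i then 1
      else if (b : ℕ) + 1 = i then -tt
      else if (b : ℕ) = i then tt
      else 0
    else if a = b then 1 else 0

lemma mulB (n i : ℕ) (h2 : 2 ≤ i) (hi : i < n)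
    (M : Matrix (Fin n) (Fin n) L2) (a b : Fin n) :
    (Bsig n i * M) a b =
      if (a : ℕ) + 1 = i then
        M ⟨i - 2, by omega⟩ b - tt * M ⟨i - 1, by omega⟩ b + tt * M ⟨i, hi⟩ b
      else M a b := by
  rw [Matrix.mul_apply]
  by_cases h : (a : ℕ) + 1 = i
  · rw [if_pos h]
    have step : ∀ k : Fin n, Bsig n i a k * M k b =
        (if k = (⟨i - 2, by omega⟩ : Fin n) then M k b else 0) +
        (if k = (⟨i - 1, by omega⟩ : Fin n) then -tt * M k b else 0) +
        (if k = (⟨i, hi⟩ : Fin n) then tt * M k b else 0) := by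
      intro k
      simp only [Bsig, Matrix.of_apply, if_pos h, Fin.ext_iff, Fin.val_mk]
      split_ifs <;> first | omega | ring
    rw [Finset.sum_congr rfl fun k _ => step k]
    rw [Finset.sum_add_distrib, Finset.sum_add_distrib]
    simp [Finset.sum_ite_eq']
    ring
  · rw [if_neg h]
    simp [Bsig, Matrix.of_apply, if_neg h, ite_mul, Finset.sum_ite_eq]

/-- the matrices of the homological representation `ρ_RH` satisfy the
braid relations and distant commutation relations. -/
theorem stmt6 (n : ℕ) (hn : 4 ≤ n) :
    (∀ i : ℕ, 2 ≤ i → i ≤ n - 2 →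
      Bsig n i * Bsig n (i + 1) * Bsig n i = Bsig n (i + 1) * Bsig n i * Bsig n (i + 1)) ∧
    (∀ i j : ℕ, 2 ≤ i → i ≤ n - 1 → 2 ≤ j → j ≤ n - 1 → (i + 2 ≤ j ∨ j + 2 ≤ i) →
      Bsig n i * Bsig n j = Bsig n j * Bsig n i) := by
  constructor
  · intro i h2 hi
    have hin : i < n := by omega
    have hin1 : i + 1 < n := by omega
    refine Matrix.ext fun a b => ?_
    rw [mul_assoc, mul_assoc]
    simp only [mulB n i h2 hin, mulB n (i + 1) (by omega) hin1]
    simp only [Bsig, Matrix.of_apply, Fin.ext_iff, Fin.val_mk]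
    have A1 : (i - 2 + 1 = i + 1) = False := eq_false (by omega)
    have A2 : (i + 1 - 2 + 1 = i) = True := eq_true (by omega)
    have A3 : (i + 1 - 1 + 1 = i) = False := eq_false (by omega)
    have A4 : (i + 1 + 1 = i) = False := eq_false (by omega)
    have A5 : (i - 2 + 1 = i) = False := eq_false (by omega)
    have A6 : (i - 1 + 1 = i + 1) = False := eq_false (by omega)
    have A7 : (i - 1 + 1 = i) = True := eq_true (by omega)
    have A8 : (i + 1 = i) = False := eq_false (by omega)
    have A9 : (i + 1 - 2 + 1 = i + 1) = False := eq_false (by omega)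
    have A10 : (i + 1 - 1 + 1 = i + 1) = True := eq_true (by omega)
    have A11 : (i + 1 + 1 = i + 1) = False := eq_false (by omega)
    have E1 : i + 1 - 2 = i - 1 := by omega
    have E2 : i + 1 - 1 = i := by omega
    have B1 : (i - 2 = (b : ℕ)) = ((b : ℕ) + 2 = i) := propext (by omega)
    have B2 : (i - 1 = (b : ℕ)) = ((b : ℕ) + 1 = i) := propext (by omega)
    have B3 : (i = (b : ℕ)) = ((b : ℕ) = i) := propext (by omega)
    have B4 : (i + 1 = (b : ℕ)) = ((b : ℕ) = i + 1) := propext (by omega)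
    have B5 : ((b : ℕ) + 2 = i + 1) = ((b : ℕ) + 1 = i) := propext (by omega)
    have B6 : ((b : ℕ) + 1 = i + 1) = ((b : ℕ) = i) := propext (by omega)
    simp only [A1, A2, A3, A4, A5, A6, A7, A8, A9, A10, A11, E1, E2,
      B1, B2, B3, B4, B5, B6, if_true, if_false, ite_true, ite_false]
    split_ifs <;> first | with_reducible rfl | omega | ring
  · intro i j h2i hi h2j hj hd
    have hin : i < n := by omega
    have hjn : j < n := by omega
    refine Matrix.ext fun a b => ?_
    simp only [mulB n i h2i hin, mulB n j h2j hjn]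
    simp only [Bsig, Matrix.of_apply, Fin.ext_iff, Fin.val_mk]
    have C1 : (i - 2 + 1 = j) = False := eq_false (by omega)
    have C2 : (i - 1 + 1 = j) = False := eq_false (by omega)
    have C3 : (i + 1 = j) = False := eq_false (by omega)
    have C4 : (j - 2 + 1 = i) = False := eq_false (by omega)
    have C5 : (j - 1 + 1 = i) = False := eq_false (by omega)
    have C6 : (j + 1 = i) = False := eq_false (by omega)
    have B1 : (i - 2 = (b : ℕ)) = ((b : ℕ) + 2 = i) := propext (by omega)
    have B2 : (i - 1 = (b : ℕ)) = ((b : ℕ) + 1 = i) := propext (by omega)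
    have B3 : (i = (b : ℕ)) = ((b : ℕ) = i) := propext (by omega)
    have B4 : (j - 2 = (b : ℕ)) = ((b : ℕ) + 2 = j) := propext (by omega)
    have B5 : (j - 1 = (b : ℕ)) = ((b : ℕ) + 1 = j) := propext (by omega)
    have B6 : (j = (b : ℕ)) = ((b : ℕ) = j) := propext (by omega)
    simp only [C1, C2, C3, C4, C5, C6, B1, B2, B3, B4, B5, B6,
      if_true, if_false, ite_true, ite_false]
    split_ifs <;> first | omega | ring

end
end

section
/- Let R_n be the quotient of the path algebra of the cyclic quiver with n vertices (with arrows (i|i+1) and (i+1|i) between adjacent vertices, indices mod n) by the relations (i|i+1|i) = (i|i−1|i) and (i−1|i|i+1) = (i+1|i|i−1) = 0 for all i. Then R_n is free of rank 4n as an abelian group, with basis given by the paths (i), (i|i+1), (i|i−1), (i|i−1|i) for i = 1,…,n. -/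
set_option linter.unusedSectionVars false

def Mdl (n : ℕ) : Type := Fin n × Fin 4 → ℤ

namespace Mdl
variable {n : ℕ} [NeZero n]

instance : AddCommGroup (Mdl n) := Pi.addCommGroup

@[simp] lemma add_apply (x y : Mdl n) (p) : (x + y) p = x p + y p := rfl
@[simp] lemma zero_apply (p) : (0 : Mdl n) p = 0 := rfl

def mulF (x y : Mdl n) : Mdl n := fun p =>
  if p.2 = 0 then x (p.1, 0) * y (p.1, 0)
  else if p.2 = 1 then x (p.1, 0) * y (p.1, 1) + x (p.1, 1) * y (p.1 + 1, 0)
  else if p.2 = 2 then x (p.1, 0) * y (p.1, 2) + x (p.1, 2) * y (p.1 - 1, 0)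
  else x (p.1, 0) * y (p.1, 3) + x (p.1, 3) * y (p.1, 0)
    + x (p.1, 1) * y (p.1 + 1, 2) + x (p.1, 2) * y (p.1 - 1, 1)

instance : Mul (Mdl n) := ⟨mulF⟩
instance : One (Mdl n) := ⟨fun p => if p.2 = 0 then 1 else 0⟩

@[simp] lemma mul_e (x y : Mdl n) (i) : (x * y) (i, 0) = x (i, 0) * y (i, 0) := by
  show mulF x y _ = _; simp [mulF]
@[simp] lemma mul_a (x y : Mdl n) (i) :
    (x * y) (i, 1) = x (i, 0) * y (i, 1) + x (i, 1) * y (i + 1, 0) := by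
  show mulF x y _ = _; simp [mulF]
@[simp] lemma mul_b (x y : Mdl n) (i) :
    (x * y) (i, 2) = x (i, 0) * y (i, 2) + x (i, 2) * y (i - 1, 0) := by
  show mulF x y _ = _; simp [mulF]
@[simp] lemma mul_c (x y : Mdl n) (i) :
    (x * y) (i, 3) = x (i, 0) * y (i, 3) + x (i, 3) * y (i, 0)
      + x (i, 1) * y (i + 1, 2) + x (i, 2) * y (i - 1, 1) := by
  show mulF x y _ = _; simp [mulF]
@[simp] lemma one_e (i : Fin n) : (1 : Mdl n) (i, 0) = 1 := rfl
@[simp] lemma one_a (i : Fin n) : (1 : Mdl n) (i, 1) = 0 := rfl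
@[simp] lemma one_b (i : Fin n) : (1 : Mdl n) (i, 2) = 0 := rfl
@[simp] lemma one_c (i : Fin n) : (1 : Mdl n) (i, 3) = 0 := rfl

lemma fin4_cases (k : Fin 4) : k = 0 ∨ k = 1 ∨ k = 2 ∨ k = 3 := by
  rcases k with ⟨k, hk⟩
  simp only [Fin.ext_iff]
  omega

private lemma ldistrib (x y z : Mdl n) : x * (y + z) = x * y + x * z := by
  funext ⟨i, k⟩
  rcases fin4_cases k with h | h | h | h <;> subst h <;>
    simp only [mul_e, mul_a, mul_b, mul_c, add_apply] <;> ring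

private lemma rdistrib (x y z : Mdl n) : (x + y) * z = x * z + y * z := by
  funext ⟨i, k⟩
  rcases fin4_cases k with h | h | h | h <;> subst h <;>
    simp only [mul_e, mul_a, mul_b, mul_c, add_apply] <;> ring

private lemma zmul (x : Mdl n) : 0 * x = 0 := by
  funext ⟨i, k⟩
  rcases fin4_cases k with h | h | h | h <;> subst h <;>
    simp only [mul_e, mul_a, mul_b, mul_c, zero_apply] <;> ring

private lemma mulz (x : Mdl n) : x * 0 = 0 := by
  funext ⟨i, k⟩
  rcases fin4_cases k with h | h | h | h <;> subst h <;>
    simp only [mul_e, mul_a, mul_b, mul_c, zero_apply] <;> ring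

private lemma massoc (x y z : Mdl n) : x * y * z = x * (y * z) := by
  funext ⟨i, k⟩
  rcases fin4_cases k with h | h | h | h <;> subst h <;>
    simp only [mul_e, mul_a, mul_b, mul_c, add_sub_cancel_right, sub_add_cancel] <;> ring

private lemma onemul (x : Mdl n) : 1 * x = x := by
  funext ⟨i, k⟩
  rcases fin4_cases k with h | h | h | h <;> subst h <;>
    simp only [mul_e, mul_a, mul_b, mul_c, one_e, one_a, one_b, one_c] <;> ring

private lemma mulone (x : Mdl n) : x * 1 = x := by
  funext ⟨i, k⟩
  rcases fin4_cases k with h | h | h | h <;> subst h <;>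
    simp only [mul_e, mul_a, mul_b, mul_c, one_e, one_a, one_b, one_c] <;> ring

instance : Ring (Mdl n) :=
  { (inferInstance : AddCommGroup (Mdl n)),
    (inferInstance : Mul (Mdl n)), (inferInstance : One (Mdl n)) with
    left_distrib := ldistrib
    right_distrib := rdistrib
    zero_mul := zmul
    mul_zero := mulz
    mul_assoc := massoc
    one_mul := onemul
    mul_one := mulone }

lemma sum_apply {ι : Type*} (s : Finset ι) (f : ι → Mdl n) (p) :
    (∑ i ∈ s, f i) p = ∑ i ∈ s, f i p := by
  classical
  induction s using Finset.induction with
  | empty => rfl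
  | insert a s h ih => rw [Finset.sum_insert h, Finset.sum_insert h, add_apply, ih]

/-- basis elements of the model -/
def δ (q : Fin n × Fin 4) : Mdl n := fun p => if p = q then 1 else 0

def E (i : Fin n) : Mdl n := δ (i, 0)
def A (i : Fin n) : Mdl n := δ (i, 1)
def B (i : Fin n) : Mdl n := δ (i, 2)
def C (i : Fin n) : Mdl n := δ (i, 3)

@[simp] lemma E_e (i m : Fin n) : E i (m, 0) = if m = i then 1 else 0 := by
  simp [E, δ, Prod.ext_iff]
@[simp] lemma E_a (i m : Fin n) : E i (m, 1) = 0 := by simp [E, δ, Prod.ext_iff]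
@[simp] lemma E_b (i m : Fin n) : E i (m, 2) = 0 := by simp [E, δ, Prod.ext_iff]
@[simp] lemma E_c (i m : Fin n) : E i (m, 3) = 0 := by simp [E, δ, Prod.ext_iff]
@[simp] lemma A_a (i m : Fin n) : A i (m, 1) = if m = i then 1 else 0 := by
  simp [A, δ, Prod.ext_iff]
@[simp] lemma A_e (i m : Fin n) : A i (m, 0) = 0 := by simp [A, δ, Prod.ext_iff]
@[simp] lemma A_b (i m : Fin n) : A i (m, 2) = 0 := by simp [A, δ, Prod.ext_iff]
@[simp] lemma A_c (i m : Fin n) : A i (m, 3) = 0 := by simp [A, δ, Prod.ext_iff]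
@[simp] lemma B_b (i m : Fin n) : B i (m, 2) = if m = i then 1 else 0 := by
  simp [B, δ, Prod.ext_iff]
@[simp] lemma B_e (i m : Fin n) : B i (m, 0) = 0 := by simp [B, δ, Prod.ext_iff]
@[simp] lemma B_a (i m : Fin n) : B i (m, 1) = 0 := by simp [B, δ, Prod.ext_iff]
@[simp] lemma B_c (i m : Fin n) : B i (m, 3) = 0 := by simp [B, δ, Prod.ext_iff]
@[simp] lemma C_c (i m : Fin n) : C i (m, 3) = if m = i then 1 else 0 := by
  simp [C, δ, Prod.ext_iff]
@[simp] lemma C_e (i m : Fin n) : C i (m, 0) = 0 := by simp [C, δ, Prod.ext_iff]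
@[simp] lemma C_a (i m : Fin n) : C i (m, 1) = 0 := by simp [C, δ, Prod.ext_iff]
@[simp] lemma C_b (i m : Fin n) : C i (m, 2) = 0 := by simp [C, δ, Prod.ext_iff]

lemma E_mul_E_self (i : Fin n) : E i * E i = E i := by
  funext ⟨m, k⟩
  rcases fin4_cases k with h | h | h | h <;> subst h <;> simp <;> aesop
lemma E_mul_E (i j : Fin n) (h : i ≠ j) : E i * E j = 0 := by
  funext ⟨m, k⟩
  rcases fin4_cases k with h' | h' | h' | h' <;> subst h' <;> simp <;> aesop
lemma sum_E : (∑ i, E i : Mdl n) = 1 := by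
  funext ⟨m, k⟩
  rcases fin4_cases k with h | h | h | h <;> subst h <;> rw [sum_apply] <;> simp
lemma E_mul_A (i : Fin n) : E i * A i = A i := by
  funext ⟨m, k⟩
  rcases fin4_cases k with h | h | h | h <;> subst h <;> simp <;> aesop
lemma A_mul_E (i : Fin n) : A i * E (i + 1) = A i := by
  funext ⟨m, k⟩
  rcases fin4_cases k with h | h | h | h <;> subst h <;> simp <;> aesop
lemma E_mul_B (i : Fin n) : E i * B i = B i := by
  funext ⟨m, k⟩
  rcases fin4_cases k with h | h | h | h <;> subst h <;> simp <;> aesop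
lemma B_mul_E (i : Fin n) : B i * E (i - 1) = B i := by
  funext ⟨m, k⟩
  rcases fin4_cases k with h | h | h | h <;> subst h <;> simp <;> aesop
lemma A_mul_A (i j : Fin n) : A i * A j = 0 := by
  funext ⟨m, k⟩
  rcases fin4_cases k with h | h | h | h <;> subst h <;> simp
lemma B_mul_B (i j : Fin n) : B i * B j = 0 := by
  funext ⟨m, k⟩
  rcases fin4_cases k with h | h | h | h <;> subst h <;> simp
lemma A_mul_B (i : Fin n) : A i * B (i + 1) = C i := by
  funext ⟨m, k⟩
  rcases fin4_cases k with h | h | h | h <;> subst h <;> simp <;> aesop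
lemma B_mul_A (i : Fin n) : B i * A (i - 1) = C i := by
  funext ⟨m, k⟩
  rcases fin4_cases k with h | h | h | h <;> subst h <;> simp <;> aesop

end Mdl
inductive Gen (n : ℕ) : Type
  | e : Fin n → Gen n
  | a : Fin n → Gen n
  | b : Fin n → Gen n

/-- The generator `(i)` in the free algebra. -/
noncomputable def Ev (n : ℕ) (i : Fin n) : FreeAlgebra ℤ (Gen n) := FreeAlgebra.ι ℤ (Gen.e i)

/-- The generator `(i|i+1)` in the free algebra. -/
noncomputable def Av (n : ℕ) (i : Fin n) : FreeAlgebra ℤ (Gen n) := FreeAlgebra.ι ℤ (Gen.a i)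

/-- The generator `(i+1|i)` in the free algebra. -/
noncomputable def Bv (n : ℕ) (i : Fin n) : FreeAlgebra ℤ (Gen n) := FreeAlgebra.ι ℤ (Gen.b i)

/-- The defining relations of `R_n`: the path-algebra relations (the `(i)` are
orthogonal idempotents summing to `1` and the arrows compose as paths of the cyclic
quiver), together with the quiver-algebra relations
`(i|i+1|i) = (i|i-1|i)` and `(i-1|i|i+1) = (i+1|i|i-1) = 0` (indices mod `n`). -/
inductive QRel (n : ℕ) [NeZero n] : FreeAlgebra ℤ (Gen n) → FreeAlgebra ℤ (Gen n) → Prop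
  | idem (i : Fin n) : QRel n (Ev n i * Ev n i) (Ev n i)
  | orth (i j : Fin n) (h : i ≠ j) : QRel n (Ev n i * Ev n j) 0
  | sum_eq_one : QRel n (∑ i, Ev n i) 1
  | eA (i : Fin n) : QRel n (Ev n i * Av n i) (Av n i)
  | Ae (i : Fin n) : QRel n (Av n i * Ev n (i + 1)) (Av n i)
  | eB (i : Fin n) : QRel n (Ev n (i + 1) * Bv n i) (Bv n i)
  | Be (i : Fin n) : QRel n (Bv n i * Ev n i) (Bv n i)
  | loop (i : Fin n) : QRel n (Av n i * Bv n i) (Bv n (i - 1) * Av n (i - 1))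
  | aa (i : Fin n) : QRel n (Av n (i - 1) * Av n i) 0
  | bb (i : Fin n) : QRel n (Bv n i * Bv n (i - 1)) 0

/-- The algebra `R_n`: the quotient of the path algebra of the cyclic quiver on `n`
vertices by the relations `(i|i+1|i) = (i|i-1|i)`, `(i-1|i|i+1) = (i+1|i|i-1) = 0`. -/
abbrev Rn (n : ℕ) [NeZero n] : Type := RingQuot (QRel n)

/-- The constant path `(i)` in `R_n`. -/
noncomputable def ee (n : ℕ) [NeZero n] (i : Fin n) : Rn n :=
  RingQuot.mkRingHom (QRel n) (Ev n i)

/-- The path `(i|i+1)` in `R_n`. -/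
noncomputable def aA (n : ℕ) [NeZero n] (i : Fin n) : Rn n :=
  RingQuot.mkRingHom (QRel n) (Av n i)

/-- The path `(i+1|i)` in `R_n`. -/
noncomputable def bB (n : ℕ) [NeZero n] (i : Fin n) : Rn n :=
  RingQuot.mkRingHom (QRel n) (Bv n i)


noncomputable def g (n : ℕ) [NeZero n] : Gen n → Mdl n
  | Gen.e i => Mdl.E i
  | Gen.a i => Mdl.A i
  | Gen.b i => Mdl.B (i + 1)

noncomputable def f (n : ℕ) [NeZero n] : FreeAlgebra ℤ (Gen n) →ₐ[ℤ] Mdl n :=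
  FreeAlgebra.lift ℤ (g n)

@[simp] lemma f_Ev {n : ℕ} [NeZero n] (i : Fin n) : f n (Ev n i) = Mdl.E i := by
  simp [f, Ev, g]
@[simp] lemma f_Av {n : ℕ} [NeZero n] (i : Fin n) : f n (Av n i) = Mdl.A i := by
  simp [f, Av, g]
@[simp] lemma f_Bv {n : ℕ} [NeZero n] (i : Fin n) : f n (Bv n i) = Mdl.B (i + 1) := by
  simp [f, Bv, g]

lemma f_rel {n : ℕ} [NeZero n] : ∀ ⦃x y⦄, QRel n x y → f n x = f n y := by
  intro x y h
  induction h with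
  | idem i => simp [Mdl.E_mul_E_self]
  | orth i j h => simp [Mdl.E_mul_E _ _ h]
  | sum_eq_one => rw [map_sum]; simp [Mdl.sum_E]
  | eA i => simp [Mdl.E_mul_A]
  | Ae i => simp [Mdl.A_mul_E]
  | eB i => simp [Mdl.E_mul_B]
  | Be i =>
      have h := Mdl.B_mul_E (n := n) (i + 1)
      rw [add_sub_cancel_right] at h
      simpa using h
  | loop i =>
      rw [map_mul, map_mul, f_Av, f_Bv, f_Bv, f_Av, sub_add_cancel,
        Mdl.A_mul_B, Mdl.B_mul_A]
  | aa i => simp [Mdl.A_mul_A]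
  | bb i => simp [Mdl.B_mul_B]

noncomputable def φ (n : ℕ) [NeZero n] : Rn n →ₐ[ℤ] Mdl n :=
  RingQuot.liftAlgHom ℤ ⟨f n, f_rel⟩

@[simp] lemma φ_mk {n : ℕ} [NeZero n] (x : FreeAlgebra ℤ (Gen n)) :
    φ n (RingQuot.mkRingHom (QRel n) x) = f n x := by
  have : RingQuot.mkRingHom (QRel n) x = RingQuot.mkAlgHom ℤ (QRel n) x := by
    rw [← RingQuot.mkAlgHom_coe ℤ (QRel n)]; rfl
  rw [this]
  exact RingQuot.liftAlgHom_mkAlgHom_apply ℤ (f n) f_rel x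

@[simp] lemma φ_ee {n : ℕ} [NeZero n] (i : Fin n) : φ n (ee n i) = Mdl.E i := by
  simp [ee]
@[simp] lemma φ_aA {n : ℕ} [NeZero n] (i : Fin n) : φ n (aA n i) = Mdl.A i := by
  simp [aA]
@[simp] lemma φ_bB {n : ℕ} [NeZero n] (i : Fin n) : φ n (bB n i) = Mdl.B (i + 1) := by
  simp [bB]

section RnSide
variable {n : ℕ} [NeZero n]

lemma mrel {x y : FreeAlgebra ℤ (Gen n)} (h : QRel n x y) :
    RingQuot.mkRingHom (QRel n) x = RingQuot.mkRingHom (QRel n) y :=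
  RingQuot.mkRingHom_rel h

lemma Lee (i j : Fin n) : ee n i * ee n j = if i = j then ee n i else 0 := by
  rw [ee, ee, ← map_mul]
  split_ifs with h
  · subst h; exact mrel (QRel.idem i)
  · rw [mrel (QRel.orth i j h), map_zero]

lemma Lone : (1 : Rn n) = ∑ i, ee n i := by
  have : (∑ i, ee n i) = RingQuot.mkRingHom (QRel n) (∑ i, Ev n i) := (map_sum _ _ _).symm
  rw [this, mrel QRel.sum_eq_one, map_one]

lemma LeA (i : Fin n) : ee n i * aA n i = aA n i := by
  rw [ee, aA, ← map_mul]; exact mrel (QRel.eA i)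

lemma LAe (i : Fin n) : aA n i * ee n (i + 1) = aA n i := by
  rw [ee, aA, ← map_mul]; exact mrel (QRel.Ae i)

lemma LeB (i : Fin n) : ee n (i + 1) * bB n i = bB n i := by
  rw [ee, bB, ← map_mul]; exact mrel (QRel.eB i)

lemma LBe (i : Fin n) : bB n i * ee n i = bB n i := by
  rw [ee, bB, ← map_mul]; exact mrel (QRel.Be i)

lemma Lloop (i : Fin n) : aA n i * bB n i = bB n (i - 1) * aA n (i - 1) := by
  rw [aA, bB, bB, aA, ← map_mul, ← map_mul]; exact mrel (QRel.loop i)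

lemma Laa (i : Fin n) : aA n (i - 1) * aA n i = 0 := by
  rw [aA, aA, ← map_mul, mrel (QRel.aa i), map_zero]

lemma Lbb (i : Fin n) : bB n i * bB n (i - 1) = 0 := by
  rw [bB, bB, ← map_mul, mrel (QRel.bb i), map_zero]

-- derived multiplication table
lemma DeA (i j : Fin n) : ee n i * aA n j = if i = j then aA n j else 0 := by
  split_ifs with h
  · subst h; exact LeA i
  · rw [← LeA j, ← mul_assoc, Lee, if_neg h, zero_mul]

lemma DAe (i j : Fin n) : aA n i * ee n j = if j = i + 1 then aA n i else 0 := by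
  split_ifs with h
  · subst h; exact LAe i
  · rw [← LAe i, mul_assoc, Lee, if_neg (fun hh => h hh.symm), mul_zero]

lemma DeB (i j : Fin n) : ee n i * bB n j = if i = j + 1 then bB n j else 0 := by
  split_ifs with h
  · subst h; exact LeB j
  · rw [← LeB j, ← mul_assoc, Lee, if_neg h, zero_mul]

lemma DBe (i j : Fin n) : bB n i * ee n j = if j = i then bB n i else 0 := by
  split_ifs with h
  · rw [h]; exact LBe i
  · rw [← LBe i, mul_assoc, Lee, if_neg (fun hh => h hh.symm), mul_zero]

lemma DAA (i j : Fin n) : aA n i * aA n j = 0 := by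
  by_cases h : j = i + 1
  · subst h
    have := Laa (n := n) (i + 1)
    rwa [add_sub_cancel_right] at this
  · rw [← LAe i, mul_assoc, DeA, if_neg, mul_zero]
    intro hh; exact h hh.symm

lemma DBB (i j : Fin n) : bB n i * bB n j = 0 := by
  by_cases h : i = j + 1
  · subst h
    have := Lbb (n := n) (j + 1)
    rwa [add_sub_cancel_right] at this
  · rw [← LeB j, ← mul_assoc, DBe, if_neg, zero_mul]
    intro hh; exact h hh.symm

lemma DAB (i j : Fin n) : aA n i * bB n j = if j = i then bB n (i - 1) * aA n (i - 1) else 0 := by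
  split_ifs with h
  · subst h; exact Lloop j
  · rw [← LeB j, ← mul_assoc, DAe,
      if_neg (fun hh => h (add_right_cancel hh)), zero_mul]

lemma DBA (i j : Fin n) : bB n i * aA n j = if j = i then bB n i * aA n i else 0 := by
  split_ifs with h
  · subst h; rfl
  · rw [← LeA j, ← mul_assoc, DBe, if_neg h, zero_mul]

lemma DeC (i j : Fin n) :
    ee n i * (bB n (j - 1) * aA n (j - 1)) =
      if i = j then bB n (j - 1) * aA n (j - 1) else 0 := by
  rw [← mul_assoc, DeB, sub_add_cancel]
  split_ifs with h
  · rfl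
  · rw [zero_mul]

lemma DCe (i j : Fin n) :
    (bB n (i - 1) * aA n (i - 1)) * ee n j =
      if j = i then bB n (i - 1) * aA n (i - 1) else 0 := by
  rw [mul_assoc, DAe, sub_add_cancel]
  split_ifs with h
  · rfl
  · rw [mul_zero]

lemma DAC (i j : Fin n) : aA n i * (bB n (j - 1) * aA n (j - 1)) = 0 := by
  rw [← mul_assoc, DAB]
  split_ifs with h
  · rw [mul_assoc, ← h, DAA, mul_zero]
  · exact zero_mul _

lemma DCA (i j : Fin n) : (bB n (i - 1) * aA n (i - 1)) * aA n j = 0 := by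
  rw [mul_assoc, DAA, mul_zero]

lemma DCB (i j : Fin n) : (bB n (i - 1) * aA n (i - 1)) * bB n j = 0 := by
  rw [mul_assoc, DAB]
  split_ifs with h
  · rw [← mul_assoc, DBB, zero_mul]
  · exact mul_zero _

lemma DBC (i j : Fin n) : bB n i * (bB n (j - 1) * aA n (j - 1)) = 0 := by
  rw [← mul_assoc, DBB, zero_mul]

lemma DCC (i j : Fin n) :
    (bB n (i - 1) * aA n (i - 1)) * (bB n (j - 1) * aA n (j - 1)) = 0 := by
  rw [mul_assoc, DAC, mul_zero]

end RnSide

section Assemble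
variable {n : ℕ} [NeZero n]

/-- the candidate basis family in `Rn n` -/
noncomputable def tbl (n : ℕ) [NeZero n] (p : Fin n × Fin 4) : Rn n :=
  ![ee n p.1, aA n p.1, bB n (p.1 - 1), bB n (p.1 - 1) * aA n (p.1 - 1)] p.2

@[simp] lemma tbl0 (i : Fin n) : tbl n (i, 0) = ee n i := rfl
@[simp] lemma tbl1 (i : Fin n) : tbl n (i, 1) = aA n i := rfl
@[simp] lemma tbl2 (i : Fin n) : tbl n (i, 2) = bB n (i - 1) := rfl
@[simp] lemma tbl3 (i : Fin n) : tbl n (i, 3) = bB n (i - 1) * aA n (i - 1) := rfl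

noncomputable abbrev sp (n : ℕ) [NeZero n] : Submodule ℤ (Rn n) :=
  Submodule.span ℤ (Set.range (tbl n))

lemma mem_ee (i : Fin n) : ee n i ∈ sp n :=
  Submodule.subset_span ⟨(i, 0), rfl⟩
lemma mem_aA (i : Fin n) : aA n i ∈ sp n :=
  Submodule.subset_span ⟨(i, 1), rfl⟩
lemma mem_bB (u : Fin n) : bB n u ∈ sp n := by
  have h : tbl n (u + 1, 2) = bB n u := by rw [tbl2, add_sub_cancel_right]
  exact Submodule.subset_span ⟨(u + 1, 2), h⟩
lemma mem_BA (u : Fin n) : bB n u * aA n u ∈ sp n := by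
  have h : tbl n (u + 1, 3) = bB n u * aA n u := by rw [tbl3, add_sub_cancel_right]
  exact Submodule.subset_span ⟨(u + 1, 3), h⟩

lemma tbl_mul_tbl (p q : Fin n × Fin 4) : tbl n p * tbl n q ∈ sp n := by
  obtain ⟨i, k⟩ := p
  obtain ⟨j, l⟩ := q
  rcases Mdl.fin4_cases k with h | h | h | h <;> subst h <;>
    rcases Mdl.fin4_cases l with h | h | h | h <;> subst h <;>
      simp only [tbl0, tbl1, tbl2, tbl3]
  · rw [Lee]; split_ifs; exacts [mem_ee i, zero_mem _]
  · rw [DeA]; split_ifs; exacts [mem_aA j, zero_mem _]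
  · rw [DeB]; split_ifs; exacts [mem_bB (j - 1), zero_mem _]
  · rw [DeC]; split_ifs with h
    · exact Submodule.subset_span ⟨(j, 3), rfl⟩
    · exact zero_mem _
  · rw [DAe]; split_ifs; exacts [mem_aA i, zero_mem _]
  · rw [DAA]; exact zero_mem _
  · rw [DAB]; split_ifs; exacts [mem_BA (i - 1), zero_mem _]
  · rw [DAC]; exact zero_mem _
  · rw [DBe]; split_ifs; exacts [mem_bB (i - 1), zero_mem _]
  · rw [DBA]; split_ifs; exacts [mem_BA (i - 1), zero_mem _]
  · rw [DBB]; exact zero_mem _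
  · rw [DBC]; exact zero_mem _
  · rw [DCe]; split_ifs; exacts [mem_BA (i - 1), zero_mem _]
  · rw [DCA]; exact zero_mem _
  · rw [DCB]; exact zero_mem _
  · rw [DCC]; exact zero_mem _

lemma sp_mul_mem {x y : Rn n} (hx : x ∈ sp n) (hy : y ∈ sp n) : x * y ∈ sp n := by
  induction hy using Submodule.span_induction with
  | mem b hb =>
    induction hx using Submodule.span_induction with
    | mem a ha =>
      obtain ⟨p, rfl⟩ := ha
      obtain ⟨q, rfl⟩ := hb
      exact tbl_mul_tbl p q
    | zero => rw [zero_mul]; exact zero_mem _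
    | add a1 a2 _ _ ih1 ih2 => rw [add_mul]; exact add_mem ih1 ih2
    | smul z a _ ih => rw [smul_mul_assoc]; exact Submodule.smul_mem _ _ ih
  | zero => rw [mul_zero]; exact zero_mem _
  | add b1 b2 _ _ ih1 ih2 => rw [mul_add]; exact add_mem ih1 ih2
  | smul z b _ ih => rw [mul_smul_comm]; exact Submodule.smul_mem _ _ ih

lemma one_mem_sp : (1 : Rn n) ∈ sp n := by
  rw [Lone]
  exact sum_mem fun i _ => mem_ee i

lemma mk_mem_sp (y : FreeAlgebra ℤ (Gen n)) : RingQuot.mkRingHom (QRel n) y ∈ sp n := by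
  induction y using FreeAlgebra.induction with
  | grade0 r =>
    have h1 : RingQuot.mkRingHom (QRel n) (algebraMap ℤ _ r) = algebraMap ℤ (Rn n) r := by
      have h2 := (RingQuot.mkAlgHom ℤ (QRel n)).commutes r
      rw [← RingQuot.mkAlgHom_coe ℤ (QRel n)]
      exact h2
    rw [h1, Algebra.algebraMap_eq_smul_one]
    exact Submodule.smul_mem _ r one_mem_sp
  | grade1 x =>
    cases x with
    | e i => exact mem_ee i
    | a i => exact mem_aA i
    | b i => exact mem_bB i
  | mul a b ha hb => rw [map_mul]; exact sp_mul_mem ha hb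
  | add a b ha hb => rw [map_add]; exact add_mem ha hb

end Assemble

section Assemble2
variable {n : ℕ} [NeZero n]
lemma sp_top : sp n = ⊤ := by
  rw [eq_top_iff]
  intro x _
  obtain ⟨y, rfl⟩ := RingQuot.mkRingHom_surjective (QRel n) x
  exact mk_mem_sp y

end Assemble2

section Final
variable {n : ℕ} [NeZero n]

noncomputable def addEqv (n : ℕ) [NeZero n] : Mdl n ≃+ (Fin n × Fin 4 → ℤ) :=
  { toFun := fun x => x, invFun := fun x => x, left_inv := fun _ => rfl,
    right_inv := fun _ => rfl, map_add' := fun _ _ => rfl }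

noncomputable def basisM (n : ℕ) [NeZero n] : Module.Basis (Fin n × Fin 4) ℤ (Mdl n) :=
  Module.Basis.ofEquivFun (addEqv n).toIntLinearEquiv

lemma basisM_apply (p : Fin n × Fin 4) : basisM n p = Mdl.δ p := by
  have h := congrFun (Module.Basis.coe_ofEquivFun (addEqv n).toIntLinearEquiv) p
  rw [basisM, h]
  rw [← AddEquiv.toIntLinearEquiv_symm, AddEquiv.coe_toIntLinearEquiv]
  funext q
  simp [addEqv, AddEquiv.symm, Mdl.δ, Pi.single_apply]
  exact Pi.single_apply p 1 q

lemma phi_tbl (p : Fin n × Fin 4) : φ n (tbl n p) = Mdl.δ p := by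
  obtain ⟨i, k⟩ := p
  rcases Mdl.fin4_cases k with h | h | h | h <;> subst h
  · rw [tbl0, φ_ee]; rfl
  · rw [tbl1, φ_aA]; rfl
  · rw [tbl2, φ_bB, sub_add_cancel]; rfl
  · rw [tbl3, map_mul, φ_bB, φ_aA, sub_add_cancel, Mdl.B_mul_A]; rfl

lemma tbl_indep : LinearIndependent ℤ (tbl n) := by
  apply LinearIndependent.of_comp (φ n).toLinearMap
  have h : ⇑(φ n).toLinearMap ∘ tbl n = ⇑(basisM n) := by
    funext p
    simp only [Function.comp_apply, AlgHom.toLinearMap_apply, phi_tbl, basisM_apply]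
  rw [h]
  exact (basisM n).linearIndependent

end Final

/-- `R_n` is free of rank `4n` as an abelian group, with basis given by
the paths `(i)`, `(i|i+1)`, `(i|i-1)`, `(i|i-1|i)` for `i = 1, …, n`. -/
theorem stmt10 (n : ℕ) [NeZero n] (hn : 3 ≤ n) :
    ∃ v : Module.Basis (Fin n × Fin 4) ℤ (Rn n), ∀ i : Fin n,
      v (i, 0) = ee n i ∧
      v (i, 1) = aA n i ∧
      v (i, 2) = bB n (i - 1) ∧
      v (i, 3) = bB n (i - 1) * aA n (i - 1) := by
  refine ⟨Module.Basis.mk tbl_indep sp_top.ge, fun i => ?_⟩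
  refine ⟨?_, ?_, ?_, ?_⟩ <;> rw [Module.Basis.mk_apply] <;> rfl
end
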